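/- Let A₀, A₁ be Hermitian d_A×d_A complex matrices with A₀² = A₁² = I, and B₀, B₁ Hermitian d_B×d_B complex matrices with B₀² = B₁² = I. Set A₊ = (A₀+A₁)/√2, A₋ = (A₀−A₁)/√2, and β̂ = A₀⊗B₀ + A₀⊗B₁ + A₁⊗B₀ − A₁⊗B₁. Then 2√2·(I⊗I) − β̂ = (1/√2)·[(A₊⊗I − I⊗B₀)² + (A₋⊗I − I⊗B₁)²]. In particular 2√2·(I⊗I) − β̂ is positive semidefinite. -/

import Mathlib

open Matrix
open scoped Kronecker ComplexOrder

/-!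
Write `a± = (a₀ ± a₁)/√2`. From `a₀² = a₁² = 1` the cross terms `a₀a₁ + a₁a₀` cancel in
`a₊² + a₋² = 2`, and since Alice's observables commute with Bob's, `(a± - b)² = a±² - 2a±b + b²`
with `b² = 1`. Summing gives `(a₊ - b₀)² + (a₋ - b₁)² = 4 - √2 β`, which is the identity after
dividing by `√2`; positivity follows because both squares are squares of Hermitian matrices.
-/

theorem chsh_sos_identity {𝕜 R : Type*} [Field 𝕜] [NeZero (2 : 𝕜)] [Ring R] [Algebra 𝕜 R]
    {s : 𝕜} (hs : s * s = 2) {a₀ a₁ b₀ b₁ : R}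
    (ha₀ : a₀ * a₀ = 1) (ha₁ : a₁ * a₁ = 1) (hb₀ : b₀ * b₀ = 1) (hb₁ : b₁ * b₁ = 1)
    (h₀₀ : Commute a₀ b₀) (h₀₁ : Commute a₀ b₁) (h₁₀ : Commute a₁ b₀) (h₁₁ : Commute a₁ b₁) :
    (2 * s) • (1 : R) - (a₀ * b₀ + a₀ * b₁ + a₁ * b₀ - a₁ * b₁) =
      s⁻¹ • ((s⁻¹ • (a₀ + a₁) - b₀) ^ 2 + (s⁻¹ • (a₀ - a₁) - b₁) ^ 2) := by
  have hs0 : s ≠ 0 := by rintro rfl; exact two_ne_zero (mul_zero (0 : 𝕜) ▸ hs).symm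
  simp only [sq, smul_mul_assoc, mul_smul_comm, sub_mul, mul_sub, add_mul, mul_add,
    ha₀, ha₁, hb₀, hb₁, ← h₀₀.eq, ← h₀₁.eq, ← h₁₀.eq, ← h₁₁.eq, smul_sub, smul_add, smul_smul]
  match_scalars <;> grind

namespace Matrix

variable {l m n p α : Type*}

theorem sub_kronecker [NonUnitalNonAssocRing α] (A₁ A₂ : Matrix l m α) (B : Matrix n p α) :
    (A₁ - A₂) ⊗ₖ B = A₁ ⊗ₖ B - A₂ ⊗ₖ B := by
  ext
  simp [sub_mul]

theorem IsHermitian.kronecker [CommSemiring α] [StarRing α] {A : Matrix l l α}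
    {B : Matrix n n α} (hA : A.IsHermitian) (hB : B.IsHermitian) : (A ⊗ₖ B).IsHermitian := by
  rw [IsHermitian, conjTranspose_kronecker, hA.eq, hB.eq]

theorem IsHermitian.posSemidef_sq [Fintype n] [DecidableEq n] [Ring α] [PartialOrder α]
    [StarRing α] [StarOrderedRing α] {A : Matrix n n α} (hA : A.IsHermitian) :
    (A ^ 2).PosSemidef := by
  simpa only [sq, hA.eq] using posSemidef_conjTranspose_mul_self A

section Kronecker

variable [Fintype l] [DecidableEq l] [Fintype n] [DecidableEq n] [CommSemiring α]

theorem kronecker_one_mul_one_kronecker (A : Matrix l l α) (B : Matrix n n α) :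
    (A ⊗ₖ (1 : Matrix n n α)) * ((1 : Matrix l l α) ⊗ₖ B) = A ⊗ₖ B := by
  simp [← mul_kronecker_mul]

theorem commute_kronecker_one_one_kronecker (A : Matrix l l α) (B : Matrix n n α) :
    Commute (A ⊗ₖ (1 : Matrix n n α)) ((1 : Matrix l l α) ⊗ₖ B) := by
  simp [Commute, SemiconjBy, ← mul_kronecker_mul]

theorem kronecker_one_mul_self {A : Matrix l l α} (hA : A * A = 1) :
    (A ⊗ₖ (1 : Matrix n n α)) * (A ⊗ₖ 1) = 1 := by
  simp [← mul_kronecker_mul, hA]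

theorem one_kronecker_mul_self {B : Matrix n n α} (hB : B * B = 1) :
    ((1 : Matrix l l α) ⊗ₖ B) * (1 ⊗ₖ B) = 1 := by
  simp [← mul_kronecker_mul, hB]

end Kronecker

end Matrix

/-- sum-of-squares decomposition of the shifted CHSH operator. -/
theorem chsh_sos_decomposition (dA dB : ℕ)
    (A₀ A₁ : Matrix (Fin dA) (Fin dA) ℂ)
    (B₀ B₁ : Matrix (Fin dB) (Fin dB) ℂ)
    (hA₀ : A₀.IsHermitian) (hA₁ : A₁.IsHermitian)
    (hA₀2 : A₀ * A₀ = 1) (hA₁2 : A₁ * A₁ = 1)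
    (hB₀ : B₀.IsHermitian) (hB₁ : B₁.IsHermitian)
    (hB₀2 : B₀ * B₀ = 1) (hB₁2 : B₁ * B₁ = 1) :
    let Ap : Matrix (Fin dA) (Fin dA) ℂ := ((Real.sqrt 2 : ℂ))⁻¹ • (A₀ + A₁)
    let Am : Matrix (Fin dA) (Fin dA) ℂ := ((Real.sqrt 2 : ℂ))⁻¹ • (A₀ - A₁)
    let β : Matrix (Fin dA × Fin dB) (Fin dA × Fin dB) ℂ :=
      A₀ ⊗ₖ B₀ + A₀ ⊗ₖ B₁ + A₁ ⊗ₖ B₀ - A₁ ⊗ₖ B₁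
    (((2 * Real.sqrt 2 : ℝ) : ℂ) • (1 : Matrix (Fin dA × Fin dB) (Fin dA × Fin dB) ℂ) - β
        = ((Real.sqrt 2 : ℂ))⁻¹ •
          ((Ap ⊗ₖ (1 : Matrix (Fin dB) (Fin dB) ℂ)
              - (1 : Matrix (Fin dA) (Fin dA) ℂ) ⊗ₖ B₀) ^ 2
            + (Am ⊗ₖ (1 : Matrix (Fin dB) (Fin dB) ℂ)
              - (1 : Matrix (Fin dA) (Fin dA) ℂ) ⊗ₖ B₁) ^ 2))
      ∧ (((2 * Real.sqrt 2 : ℝ) : ℂ) • (1 : Matrix (Fin dA × Fin dB) (Fin dA × Fin dB) ℂ)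
          - β).PosSemidef := by
  intro Ap Am β
  set s : ℂ := (Real.sqrt 2 : ℂ)
  have hs : s * s = 2 := by
    rw [← Complex.ofReal_mul, Real.mul_self_sqrt zero_le_two, Complex.ofReal_ofNat]
  have hsos := chsh_sos_identity hs (kronecker_one_mul_self (n := Fin dB) hA₀2)
    (kronecker_one_mul_self hA₁2) (one_kronecker_mul_self (l := Fin dA) hB₀2)
    (one_kronecker_mul_self hB₁2) (commute_kronecker_one_one_kronecker A₀ B₀)
    (commute_kronecker_one_one_kronecker A₀ B₁) (commute_kronecker_one_one_kronecker A₁ B₀)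
    (commute_kronecker_one_one_kronecker A₁ B₁)
  simp only [kronecker_one_mul_one_kronecker, ← add_kronecker, ← sub_kronecker,
    ← smul_kronecker] at hsos
  have hcast : (((2 * Real.sqrt 2 : ℝ) : ℂ)) = 2 * s := by push_cast; rfl
  rw [hcast]
  have hs_inv : IsSelfAdjoint s⁻¹ := IsSelfAdjoint.inv₀ (Complex.conj_ofReal _)
  refine ⟨hsos, hsos ▸ PosSemidef.smul (.add ?_ ?_) (by positivity)⟩
  · exact (((hA₀.add hA₁).smul hs_inv).kronecker isHermitian_one).sub
      (isHermitian_one.kronecker hB₀) |>.posSemidef_sq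
  · exact (((hA₀.sub hA₁).smul hs_inv).kronecker isHermitian_one).sub
      (isHermitian_one.kronecker hB₁) |>.posSemidef_sq
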